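/- For k ≥ 1, set α = k²+k+1, β = 2k+1, and P_k = [[2, −β, 2],[−β, 2α, −β],[2, −β, 2]]. Then P_k is positive semidefinite of rank 2, its copositive minimum equals 2, and the set of nonnegative integer vectors attaining it has exactly 2k+5 elements. -/

import Mathlib

open Matrix

/-- The quadratic form `x ↦ xᵀ B x`. -/
def qf {n : ℕ} (B : Matrix (Fin n) (Fin n) ℝ) (x : Fin n → ℝ) : ℝ := x ⬝ᵥ B.mulVec x

/-- Coercion of an integer vector to a real vector. -/
def intCast {n : ℕ} (v : Fin n → ℤ) : Fin n → ℝ := fun i => (v i : ℝ)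

/-- `B` is strictly copositive: `xᵀBx > 0` for all nonzero nonnegative `x`. -/
def StrictlyCopositive {n : ℕ} (B : Matrix (Fin n) (Fin n) ℝ) : Prop :=
  ∀ x : Fin n → ℝ, (∀ i, 0 ≤ x i) → x ≠ 0 → 0 < qf B x

/-- The copositive minimum: infimum of `vᵀBv` over nonzero nonnegative integer vectors. -/
noncomputable def copoMin {n : ℕ} (B : Matrix (Fin n) (Fin n) ℝ) : ℝ :=
  sInf {r : ℝ | ∃ v : Fin n → ℤ, (∀ i, 0 ≤ v i) ∧ v ≠ 0 ∧ r = qf B (intCast v)}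

/-- The set of nonzero nonnegative integer vectors attaining the copositive minimum. -/
def MinCOP {n : ℕ} (B : Matrix (Fin n) (Fin n) ℝ) : Set (Fin n → ℤ) :=
  {v | (∀ i, 0 ≤ v i) ∧ v ≠ 0 ∧ qf B (intCast v) = copoMin B}

/-- `B` is perfect copositive: strictly copositive and uniquely determined among
symmetric matrices by the equations `vᵀQv = copoMin B` for `v ∈ MinCOP B`. -/
def IsPerfectCopositive {n : ℕ} (B : Matrix (Fin n) (Fin n) ℝ) : Prop :=
  B.IsSymm ∧ StrictlyCopositive B ∧
    ∀ Q : Matrix (Fin n) (Fin n) ℝ, Q.IsSymm →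
      (∀ v ∈ MinCOP B, qf Q (intCast v) = copoMin B) → Q = B

/-- The matrix `P_k` with `α = k² + k + 1` and `β = 2k + 1`. -/
noncomputable def Pk (k : ℕ) : Matrix (Fin 3) (Fin 3) ℝ :=
  !![2, -(2 * (k : ℝ) + 1), 2;
     -(2 * (k : ℝ) + 1), 2 * ((k : ℝ) ^ 2 + (k : ℝ) + 1), -(2 * (k : ℝ) + 1);
     2, -(2 * (k : ℝ) + 1), 2]

lemma Pk_herm (k : ℕ) : (Pk k).IsHermitian := by
  ext i j
  fin_cases i <;> fin_cases j <;> simp [Pk]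

lemma Pk_psd (k : ℕ) : (Pk k).PosSemidef := by
  refine posSemidef_iff_dotProduct_mulVec.mpr ⟨Pk_herm k, fun x => ?_⟩
  have : dotProduct (star x) ((Pk k) *ᵥ x) =
      2*(x 0 + x 2)^2 - 2*(2*(k:ℝ)+1)*(x 0 + x 2)*(x 1) + 2*((k:ℝ)^2+(k:ℝ)+1)*(x 1)^2 := by
    simp [Pk, mulVec, dotProduct, Fin.sum_univ_three]
    ring
  rw [this]
  nlinarith [sq_nonneg (2*(x 0 + x 2) - (2*(k:ℝ)+1)*(x 1)), sq_nonneg (x 1)]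

lemma Pk_ker (k : ℕ) :
    LinearMap.ker (Pk k).mulVecLin = Submodule.span ℝ {![1, 0, -1]} := by
  apply le_antisymm
  · intro x hx
    have hx' : (Pk k) *ᵥ x = 0 := hx
    have e0 := congrFun hx' 0
    have e1 := congrFun hx' 1
    simp [Pk, mulVec, dotProduct, Fin.sum_univ_three] at e0 e1
    have h1 : x 1 = 0 := by nlinarith
    have h02 : x 2 = -(x 0) := by nlinarith
    rw [Submodule.mem_span_singleton]
    exact ⟨x 0, by funext i; fin_cases i <;> simp [h1, h02]⟩
  · rw [Submodule.span_le, Set.singleton_subset_iff]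
    have : (Pk k) *ᵥ ![1, 0, -1] = 0 := by
      funext i
      fin_cases i <;> simp [Pk, mulVec, dotProduct, Fin.sum_univ_three] <;> ring
    exact this

lemma Pk_rank (k : ℕ) : (Pk k).rank = 2 := by
  have h := LinearMap.finrank_range_add_finrank_ker (Pk k).mulVecLin
  rw [Pk_ker] at h
  have hv : (![1, 0, -1] : Fin 3 → ℝ) ≠ 0 := by
    intro h0
    have := congrFun h0 0
    norm_num at this
  rw [finrank_span_singleton hv] at h
  have h3 : Module.finrank ℝ (Fin 3 → ℝ) = 3 := by simp
  rw [h3] at h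
  unfold Matrix.rank
  omega

def g (k : ℕ) (s b : ℤ) : ℤ :=
  2*s^2 - 2*(2*(k:ℤ)+1)*s*b + 2*((k:ℤ)^2+(k:ℤ)+1)*b^2

lemma g_double (k : ℕ) (s b : ℤ) :
    2 * g k s b = (2*s - (2*(k:ℤ)+1)*b)^2 + 3*b^2 := by
  unfold g; ring

lemma g_ge (k : ℕ) (s b : ℤ) (hs : 0 ≤ s) (hb : 0 ≤ b) (h : ¬(s = 0 ∧ b = 0)) :
    2 ≤ g k s b := by
  have hd := g_double k s b
  rcases (show b = 0 ∨ b = 1 ∨ 2 ≤ b by omega) with rfl | rfl | h2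
  · have hs1 : 1 ≤ s := by omega
    nlinarith
  · have hm : 2*s - (2*(k:ℤ)+1)*1 ≠ 0 := by omega
    have h1 : 1 ≤ (2*s - (2*(k:ℤ)+1)*1)^2 := by
      have := Int.one_le_abs hm
      nlinarith [abs_nonneg (2*s - (2*(k:ℤ)+1)*1), sq_abs (2*s - (2*(k:ℤ)+1)*1)]
    nlinarith
  · nlinarith [sq_nonneg (2*s - (2*(k:ℤ)+1)*b)]

lemma g_eq_two (k : ℕ) (s b : ℤ) (hs : 0 ≤ s) (hb : 0 ≤ b) :
    g k s b = 2 ↔ (b = 0 ∧ s = 1) ∨ (b = 1 ∧ (s = k ∨ s = k + 1)) := by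
  constructor
  · intro h
    have hd := g_double k s b
    rw [h] at hd
    have hb1 : b = 0 ∨ b = 1 := by
      by_contra hc
      have : 2 ≤ b := by omega
      nlinarith [sq_nonneg (2*s - (2*(k:ℤ)+1)*b)]
    rcases hb1 with rfl | rfl
    · left
      exact ⟨rfl, by nlinarith⟩
    · right
      refine ⟨rfl, ?_⟩
      have hm : (2*s - (2*(k:ℤ)+1)*1)^2 = 1 := by nlinarith
      have : (2*s - (2*(k:ℤ)+1)*1 - 1) * (2*s - (2*(k:ℤ)+1)*1 + 1) = 0 := by nlinarith
      rcases mul_eq_zero.1 this with h' | h' <;> omega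
  · rintro (⟨rfl, rfl⟩ | ⟨rfl, (rfl | rfl)⟩) <;> (unfold g; ring)

lemma qf_Pk (k : ℕ) (x : Fin 3 → ℝ) :
    qf (Pk k) x = 2*(x 0 + x 2)^2 - 2*(2*(k:ℝ)+1)*(x 0 + x 2)*(x 1)
      + 2*((k:ℝ)^2+(k:ℝ)+1)*(x 1)^2 := by
  simp [qf, Pk, mulVec, dotProduct, Fin.sum_univ_three]
  ring

lemma qf_Pk_int (k : ℕ) (v : Fin 3 → ℤ) :
    qf (Pk k) (intCast v) = ((g k (v 0 + v 2) (v 1) : ℤ) : ℝ) := by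
  rw [qf_Pk]
  simp only [intCast, g]
  push_cast
  ring

lemma ne_zero_iff3 (v : Fin 3 → ℤ) : v ≠ 0 ↔ ¬(v 0 = 0 ∧ v 1 = 0 ∧ v 2 = 0) := by
  constructor
  · intro h hc
    exact h (by funext i; fin_cases i <;> simp [hc.1, hc.2.1, hc.2.2])
  · intro h hc
    exact h ⟨by rw [hc]; rfl, by rw [hc]; rfl, by rw [hc]; rfl⟩

lemma qf_Pk_ge (k : ℕ) (v : Fin 3 → ℤ) (h0 : ∀ i, 0 ≤ v i) (hne : v ≠ 0) :
    (2:ℝ) ≤ qf (Pk k) (intCast v) := by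
  rw [qf_Pk_int]
  have h2 : (2:ℤ) ≤ g k (v 0 + v 2) (v 1) := by
    apply g_ge k _ _ (by have := h0 0; have := h0 2; omega) (h0 1)
    rw [ne_zero_iff3] at hne
    have := h0 0; have := h0 2
    omega
  exact_mod_cast h2

lemma v100_props : (∀ i, 0 ≤ (![1,0,0] : Fin 3 → ℤ) i) ∧ (![1,0,0] : Fin 3 → ℤ) ≠ 0 := by
  constructor
  · intro i; fin_cases i <;> norm_num
  · rw [ne_zero_iff3]; norm_num

lemma copoMin_Pk (k : ℕ) : copoMin (Pk k) = 2 := by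
  unfold copoMin
  have hmem : (2:ℝ) ∈ {r : ℝ | ∃ v : Fin 3 → ℤ, (∀ i, 0 ≤ v i) ∧ v ≠ 0 ∧ r = qf (Pk k) (intCast v)} := by
    refine ⟨![1,0,0], v100_props.1, v100_props.2, ?_⟩
    rw [qf_Pk_int]
    norm_num [g]
    left; rfl
  have hlb : ∀ r ∈ {r : ℝ | ∃ v : Fin 3 → ℤ, (∀ i, 0 ≤ v i) ∧ v ≠ 0 ∧ r = qf (Pk k) (intCast v)}, (2:ℝ) ≤ r := by
    rintro r ⟨v, h0, hne, rfl⟩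
    exact qf_Pk_ge k v h0 hne
  exact le_antisymm (csInf_le ⟨2, hlb⟩ hmem) (le_csInf ⟨2, hmem⟩ hlb)

def SetA : Finset (Fin 3 → ℤ) := {![1,0,0], ![0,0,1]}
noncomputable def SetB (k : ℕ) : Finset (Fin 3 → ℤ) := (Finset.Icc (0:ℤ) k).image (fun j => ![j, 1, (k:ℤ) - j])
noncomputable def SetC (k : ℕ) : Finset (Fin 3 → ℤ) := (Finset.Icc (0:ℤ) ((k:ℤ)+1)).image (fun j => ![j, 1, (k:ℤ)+1 - j])

lemma MinCOP_Pk (k : ℕ) : MinCOP (Pk k) = ↑(SetA ∪ SetB k ∪ SetC k) := by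
  ext v
  simp only [MinCOP, Set.mem_setOf_eq, Finset.coe_union, Set.mem_union, Finset.mem_coe,
    SetA, SetB, SetC, Finset.mem_insert, Finset.mem_singleton, Finset.mem_image, Finset.mem_Icc,
    copoMin_Pk]
  constructor
  · rintro ⟨h0, hne, hq⟩
    rw [qf_Pk_int] at hq
    have hg : g k (v 0 + v 2) (v 1) = 2 := by exact_mod_cast hq
    have h00 := h0 0; have h01 := h0 1; have h02 := h0 2
    rw [ne_zero_iff3] at hne
    rcases (g_eq_two k _ _ (by omega) h01).1 hg with ⟨hb, hs⟩ | ⟨hb, hs | hs⟩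
    · left; left
      rcases (show (v 0 = 1 ∧ v 2 = 0) ∨ (v 0 = 0 ∧ v 2 = 1) by omega) with ⟨ha, hc⟩ | ⟨ha, hc⟩
      · left; funext i; fin_cases i <;> simp [ha, hb, hc]
      · right; funext i; fin_cases i <;> simp [ha, hb, hc]
    · left; right
      exact ⟨v 0, ⟨by omega, by omega⟩, by funext i; fin_cases i <;> simp [hb] <;> omega⟩
    · right
      exact ⟨v 0, ⟨by omega, by omega⟩, by funext i; fin_cases i <;> simp [hb] <;> omega⟩
  · rintro (((rfl | rfl) | ⟨j, ⟨hj0, hjk⟩, rfl⟩) | ⟨j, ⟨hj0, hjk⟩, rfl⟩)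
    · refine ⟨v100_props.1, v100_props.2, ?_⟩
      rw [qf_Pk_int]; norm_num [g]; left; rfl
    · refine ⟨fun i => by fin_cases i <;> norm_num, by rw [ne_zero_iff3]; norm_num; decide, ?_⟩
      rw [qf_Pk_int]; norm_num [g]; left; rfl
    · refine ⟨fun i => by fin_cases i <;> simp <;> omega,
        by rw [ne_zero_iff3]; norm_num, ?_⟩
      rw [qf_Pk_int]
      have : g k (![j, 1, (k:ℤ) - j] 0 + ![j, 1, (k:ℤ) - j] 2) (![j, 1, (k:ℤ) - j] 1) = 2 := by
        simp
        exact (g_eq_two k ((k:ℤ)) 1 (by positivity) (by norm_num)).2 (Or.inr ⟨rfl, Or.inl rfl⟩)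
      rw [this]; norm_num
    · refine ⟨fun i => by fin_cases i <;> simp <;> omega,
        by rw [ne_zero_iff3]; norm_num, ?_⟩
      rw [qf_Pk_int]
      have : g k (![j, 1, (k:ℤ)+1 - j] 0 + ![j, 1, (k:ℤ)+1 - j] 2) (![j, 1, (k:ℤ)+1 - j] 1) = 2 := by
        simp
        exact (g_eq_two k ((k:ℤ)+1) 1 (by positivity) (by norm_num)).2 (Or.inr ⟨rfl, Or.inr rfl⟩)
      rw [this]; norm_num

lemma card_T (k : ℕ) : (SetA ∪ SetB k ∪ SetC k).card = 2*k+5 := by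
  have hinjB : Function.Injective (fun j : ℤ => (![j, 1, (k:ℤ) - j] : Fin 3 → ℤ)) := by
    intro a b h; simpa using congrFun h 0
  have hinjC : Function.Injective (fun j : ℤ => (![j, 1, (k:ℤ)+1 - j] : Fin 3 → ℤ)) := by
    intro a b h; simpa using congrFun h 0
  have hcardA : SetA.card = 2 := by
    rw [SetA, Finset.card_insert_of_notMem, Finset.card_singleton]
    simp only [Finset.mem_singleton]
    intro h
    simpa using congrFun h 0
  have hcardB : (SetB k).card = k + 1 := by
    rw [SetB, Finset.card_image_of_injective _ hinjB, Int.card_Icc]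
    omega
  have hcardC : (SetC k).card = k + 2 := by
    rw [SetC, Finset.card_image_of_injective _ hinjC, Int.card_Icc]
    omega
  have hABC : Disjoint SetA (SetB k) := by
    rw [Finset.disjoint_left]
    rintro a ha hb
    simp only [SetA, Finset.mem_insert, Finset.mem_singleton] at ha
    simp only [SetB, Finset.mem_image] at hb
    obtain ⟨j, _, rfl⟩ := hb
    rcases ha with h | h <;> simpa using congrFun h 1
  have hAC : Disjoint SetA (SetC k) := by
    rw [Finset.disjoint_left]
    rintro a ha hb
    simp only [SetA, Finset.mem_insert, Finset.mem_singleton] at ha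
    simp only [SetC, Finset.mem_image] at hb
    obtain ⟨j, _, rfl⟩ := hb
    rcases ha with h | h <;> simpa using congrFun h 1
  have hBC : Disjoint (SetB k) (SetC k) := by
    rw [Finset.disjoint_left]
    rintro a ha hb
    simp only [SetB, Finset.mem_image] at ha
    simp only [SetC, Finset.mem_image] at hb
    obtain ⟨j, _, rfl⟩ := ha
    obtain ⟨j', _, h⟩ := hb
    have h0 := congrFun h 0
    have h2 := congrFun h 2
    simp at h0 h2
    omega
  rw [Finset.card_union_of_disjoint (by
      rw [Finset.disjoint_union_left]; exact ⟨hAC, hBC⟩),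
    Finset.card_union_of_disjoint hABC, hcardA, hcardB, hcardC]
  omega

lemma ncard_MinCOP (k : ℕ) : (MinCOP (Pk k)).ncard = 2*k+5 := by
  rw [MinCOP_Pk, Set.ncard_coe_finset, card_T]

theorem Pk_properties (k : ℕ) (hk : 1 ≤ k) :
    (Pk k).PosSemidef ∧ (Pk k).rank = 2 ∧ copoMin (Pk k) = 2 ∧
    (MinCOP (Pk k)).ncard = 2 * k + 5 := by
  exact ⟨Pk_psd k, Pk_rank k, copoMin_Pk k, ncard_MinCOP k⟩
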